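/- arXiv:2107.11261 — 4 statements merged into one kernel-verified Lean document; each statement's English description precedes it below -/
import Mathlib

section
/- Let R be a commutative ring, L a Lie algebra over R, and D : L → L a Lie derivation (an R-linear map satisfying D⁅a,b⁆ = ⁅D a, b⁆ + ⁅a, D b⁆) with D ∘ D = 0. Then the derived product a ∘ b := ⁅D a, b⁆ satisfies the left Leibniz identity: for all a, b, c ∈ L, ⁅D a, ⁅D b, c⁆⁆ = ⁅D ⁅D a, b⁆, c⁆ + ⁅D b, ⁅D a, c⁆⁆. -/
/-- The derived product `a ∘ b := ⁅D a, b⁆` of a square-zero Lie derivation `D`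
satisfies the left Leibniz identity. -/
theorem derived_bracket_leibniz
    (R : Type*) (L : Type*) [CommRing R] [LieRing L] [LieAlgebra R L]
    (D : L →ₗ[R] L)
    (hder : ∀ a b : L, D ⁅a, b⁆ = ⁅D a, b⁆ + ⁅a, D b⁆)
    (hsq : D ∘ D = 0) :
    ∀ a b c : L, ⁅D a, ⁅D b, c⁆⁆ = ⁅D ⁅D a, b⁆, c⁆ + ⁅D b, ⁅D a, c⁆⁆ := by
  intro a b c
  have h0 : D (D a) = 0 := congrFun hsq a
  rw [hder, h0, zero_lie, zero_add, leibniz_lie]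
end

section
/- Let L be a Lie ring and q ∈ L an element such that ⁅⁅x, q⁆, q⁆ = 0 for all x ∈ L. Then the derived product a ∘ b := ⁅⁅a, q⁆, b⁆ satisfies the left Leibniz identity: for all a, b, c ∈ L, ⁅⁅a, q⁆, ⁅⁅b, q⁆, c⁆⁆ = ⁅⁅⁅⁅a, q⁆, b⁆, q⁆, c⁆ + ⁅⁅b, q⁆, ⁅⁅a, q⁆, c⁆⁆. -/
/-- For `q` in a Lie ring with `⁅⁅x, q⁆, q⁆ = 0` for all `x`, the derived product
`a ∘ b := ⁅⁅a, q⁆, b⁆` satisfies the left Leibniz identity. -/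
theorem derived_product_leibniz
    (L : Type*) [LieRing L] (q : L)
    (hq : ∀ x : L, ⁅⁅x, q⁆, q⁆ = 0) :
    ∀ a b c : L, ⁅⁅a, q⁆, ⁅⁅b, q⁆, c⁆⁆ = ⁅⁅⁅⁅a, q⁆, b⁆, q⁆, c⁆ + ⁅⁅b, q⁆, ⁅⁅a, q⁆, c⁆⁆ := by
  intro a b c
  have h1 : ⁅⁅a, q⁆, ⁅b, q⁆⁆ = ⁅⁅⁅a, q⁆, b⁆, q⁆ := by
    rw [leibniz_lie, hq, lie_zero, add_zero]
  rw [leibniz_lie ⁅a, q⁆ ⁅b, q⁆ c, h1]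
end

section
/- Let L be a Lie ring and q ∈ L an element such that ⁅⁅x, q⁆, q⁆ = 0 for all x ∈ L. Then the symmetric part of the derived product is annihilated by bracketing with q: for all a, b ∈ L, ⁅⁅⁅a, q⁆, b⁆ + ⁅⁅b, q⁆, a⁆, q⁆ = 0. -/
/-- For `q` in a Lie ring with `⁅⁅x, q⁆, q⁆ = 0` for all `x`, the symmetric part of
the derived product `a ∘ b := ⁅⁅a, q⁆, b⁆` is annihilated by bracketing with `q`. -/
theorem derived_product_symmetric_part_exact
    (L : Type*) [LieRing L] (q : L)
    (hq : ∀ x : L, ⁅⁅x, q⁆, q⁆ = 0) :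
    ∀ a b : L, ⁅⁅⁅a, q⁆, b⁆ + ⁅⁅b, q⁆, a⁆, q⁆ = 0 := by
  intro a b
  have h1 : ⁅⁅⁅a, q⁆, b⁆, q⁆ = ⁅⁅a, q⁆, ⁅b, q⁆⁆ := by
    rw [lie_lie, hq a, lie_zero, sub_zero]
  have h2 : ⁅⁅⁅b, q⁆, a⁆, q⁆ = ⁅⁅b, q⁆, ⁅a, q⁆⁆ := by
    rw [lie_lie, hq b, lie_zero, sub_zero]
  rw [add_lie, h1, h2, ← lie_skew, neg_add_cancel]
end

section
/- Let R be a commutative ring, M an R-module, and B : M → M → M an R-bilinear map satisfying the Leibniz identity B a (B b c) = B (B a b) c + B b (B a c) for all a, b, c ∈ M. Let I be the R-submodule of M spanned by all symmetrizers B a b + B b a, and let π : M → M/I be the quotient map. Then there exists an R-bilinear map B' on M/I such that B' (π a) (π b) = π (B a b) for all a, b ∈ M, and B' is antisymmetric and satisfies the Jacobi identity; that is, the Leibniz product induces a Lie bracket on the quotient M/I. -/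
/-- The Leibniz product induces a Lie bracket (antisymmetric, satisfying the Jacobi
identity) on the quotient by the submodule spanned by symmetrizers. -/
theorem leibniz_induces_lie_on_quotient
    (R : Type*) (M : Type*) [CommRing R] [AddCommGroup M] [Module R M]
    (B : M →ₗ[R] M →ₗ[R] M)
    (hL : ∀ a b c : M, B a (B b c) = B (B a b) c + B b (B a c))
    (I : Submodule R M)
    (hI : I = Submodule.span R {x : M | ∃ a b : M, x = B a b + B b a}) :
    ∃ B' : (M ⧸ I) →ₗ[R] (M ⧸ I) →ₗ[R] (M ⧸ I),
      (∀ a b : M, B' (I.mkQ a) (I.mkQ b) = I.mkQ (B a b)) ∧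
      (∀ x y : M ⧸ I, B' x y = -B' y x) ∧
      (∀ x y z : M ⧸ I, B' x (B' y z) + B' y (B' z x) + B' z (B' x y) = 0) := by
  have hgen : ∀ a b : M, B a b + B b a ∈ I := by
    intro a b
    rw [hI]
    exact Submodule.subset_span ⟨a, b, rfl⟩
  -- I is a left "ideal": B a x ∈ I for x ∈ I
  have hleft : ∀ x ∈ I, ∀ a : M, B a x ∈ I := by
    intro x hx
    rw [hI] at hx
    induction hx using Submodule.span_induction with
    | mem x hx =>
      obtain ⟨b, c, rfl⟩ := hx
      intro a
      have : B a (B b c + B c b)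
          = (B (B a b) c + B c (B a b)) + (B (B a c) b + B b (B a c)) := by
        simp only [map_add]
        rw [hL a b c, hL a c b]
        abel
      rw [this]
      exact I.add_mem (hgen _ _) (hgen _ _)
    | zero => intro a; simp
    | add x y _ _ hx hy => intro a; simpa using I.add_mem (hx a) (hy a)
    | smul r x _ hx => intro a; simpa using I.smul_mem r (hx a)
  -- I is a right "ideal": B x a ∈ I for x ∈ I
  have hright : ∀ x ∈ I, ∀ a : M, B x a ∈ I := by
    intro x hx
    rw [hI] at hx
    induction hx using Submodule.span_induction with
    | mem x hx =>
      obtain ⟨b, c, rfl⟩ := hx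
      intro a
      have : B (B b c + B c b) a = 0 := by
        have h1 : B (B b c) a = B b (B c a) - B c (B b a) := by
          rw [hL b c a]; abel
        have h2 : B (B c b) a = B c (B b a) - B b (B c a) := by
          rw [hL c b a]; abel
        simp only [map_add, LinearMap.add_apply, h1, h2]
        abel
      rw [this]
      exact I.zero_mem
    | zero => intro a; simp
    | add x y _ _ hx hy => intro a; simpa [LinearMap.add_apply] using I.add_mem (hx a) (hy a)
    | smul r x _ hx => intro a; simpa using I.smul_mem r (hx a)
  -- build B'
  set f : M →ₗ[R] M →ₗ[R] M ⧸ I := B.compr₂ I.mkQ with hf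
  have h1 : I ≤ LinearMap.ker f.flip := by
    intro x hx
    rw [LinearMap.mem_ker]
    ext a
    simpa [f, Submodule.Quotient.mk_eq_zero] using hleft x hx a
  set g : M ⧸ I →ₗ[R] M →ₗ[R] M ⧸ I := I.liftQ f.flip h1 with hg
  have h2 : I ≤ LinearMap.ker g.flip := by
    intro x hx
    rw [LinearMap.mem_ker]
    ext a
    simpa [g, f, Submodule.liftQ_apply, Submodule.Quotient.mk_eq_zero]
      using hright x hx a
  refine ⟨I.liftQ g.flip h2, ?_, ?_, ?_⟩
  case refine_1 =>
    intro a b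
    simp [g, f, Submodule.liftQ_apply]
  case refine_2 =>
    intro x y
    obtain ⟨a, rfl⟩ := I.mkQ_surjective x
    obtain ⟨b, rfl⟩ := I.mkQ_surjective y
    have hab : I.mkQ (B a b) + I.mkQ (B b a) = 0 := by
      rw [← map_add, Submodule.mkQ_apply, Submodule.Quotient.mk_eq_zero]
      exact hgen a b
    have := eq_neg_of_add_eq_zero_left hab
    simpa [g, f, Submodule.liftQ_apply] using this
  case refine_3 =>
    intro x y z
    obtain ⟨a, rfl⟩ := I.mkQ_surjective x
    obtain ⟨b, rfl⟩ := I.mkQ_surjective y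
    obtain ⟨c, rfl⟩ := I.mkQ_surjective z
    have hmem : B a (B b c) + B b (B c a) + B c (B a b) ∈ I := by
      have key : B a (B b c) + B b (B c a) + B c (B a b)
          = (B b (B a c + B c a)) + (B (B a b) c + B c (B a b)) := by
        rw [hL a b c]; simp only [map_add]; abel
      rw [key]
      exact I.add_mem (hleft _ (hgen a c) b) (hgen (B a b) c)
    have : I.mkQ (B a (B b c) + B b (B c a) + B c (B a b)) = 0 := by
      rw [Submodule.mkQ_apply, Submodule.Quotient.mk_eq_zero]
      exact hmem
    simp only [map_add] at this
    simpa [g, f, Submodule.liftQ_apply] using this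
end
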